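/- arXiv:2410.02738 — 2 statements merged into one kernel-verified Lean document; each statement's English description precedes it below -/
import Mathlib

section
/- For every complex number q with |q| < 1, (q^4; q^4)_∞ · Σ_{n≥0} (q; q)_{2n} q^{2n} / (q^4; q^4)_n = (q^4; q^4)_∞ · Σ_{n≥0} q^{2n} (q; q^2)_n / (−q^2; q^2)_n, and this common value equals 2(q^4; q^4)_∞/(1+q) − (q; q)_∞/(1+q). -/
/-- The finite q-Pochhammer symbol `(a; q)_n = ∏_{j=0}^{n-1} (1 - a q^j)`. -/
noncomputable def qPoch (a q : ℂ) (n : ℕ) : ℂ := ∏ j ∈ Finset.range n, (1 - a * q ^ j)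

/-- The infinite q-Pochhammer symbol `(a; q)_∞ = ∏_{j=0}^{∞} (1 - a q^j)`. -/
noncomputable def qPochInf (a q : ℂ) : ℂ := ∏' j : ℕ, (1 - a * q ^ j)

/-!
Since `(q; q)_{2n} = (q; q²)_n (q²; q²)_n` and `(q⁴; q⁴)_n = (q²; q²)_n (-q²; q²)_n`, the two series
agree term by term. The second one telescopes: with
`g n = (q; q²)_n (1 + q^{2n}) / ((1 + q) (-q²; q²)_n)`, the identity
`(1 + q^{2n}) - (1 - q^{2n+1}) = q^{2n} (1 + q)` gives `g n - g (n + 1) = q^{2n} (q; q²)_n / (-q²; q²)_n`,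
so the series sums to `g 0 - lim g = 2 / (1 + q) - (q; q²)_∞ / ((1 + q) (-q²; q²)_∞)`. Multiplying by
`(q⁴; q⁴)_∞ = (q²; q²)_∞ (-q²; q²)_∞` and using `(q; q)_∞ = (q; q²)_∞ (q²; q²)_∞` gives the closed form.
-/

open Filter Topology

theorem HasSum.sub_succ_of_tendsto {G : Type*} [AddCommGroup G] [TopologicalSpace G]
    [IsTopologicalAddGroup G] [T2Space G] {f : ℕ → G} {l : G}
    (hs : Summable fun n ↦ f n - f (n + 1)) (hf : Tendsto f atTop (𝓝 l)) :
    HasSum (fun n ↦ f n - f (n + 1)) (f 0 - l) := by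
  rw [hs.hasSum_iff_tendsto_nat]
  simp only [Finset.sum_range_sub']
  exact tendsto_const_nhds.sub hf

theorem norm_pow_lt_one {z : ℂ} (hz : ‖z‖ < 1) {n : ℕ} (hn : n ≠ 0) : ‖z ^ n‖ < 1 := by
  rw [norm_pow]
  exact pow_lt_one₀ (norm_nonneg z) hz hn

theorem one_add_ne_zero_of_norm_lt_one {z : ℂ} (hz : ‖z‖ < 1) : 1 + z ≠ 0 := fun h ↦ by
  rw [eq_neg_of_add_eq_zero_right h, norm_neg, norm_one] at hz
  exact lt_irrefl 1 hz

section QPochhammer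

variable {a q : ℂ}

theorem one_sub_mul_pow_ne_zero (ha : ‖a‖ < 1) (hq : ‖q‖ ≤ 1) (j : ℕ) : 1 - a * q ^ j ≠ 0 := by
  refine sub_ne_zero.mpr fun h ↦ (?_ : ‖a * q ^ j‖ < 1).ne (by rw [← h, norm_one])
  rw [norm_mul, norm_pow]
  exact (mul_le_of_le_one_right (norm_nonneg a) (pow_le_one₀ (norm_nonneg q) hq)).trans_lt ha

theorem qPoch_ne_zero (ha : ‖a‖ < 1) (hq : ‖q‖ ≤ 1) (n : ℕ) : qPoch a q n ≠ 0 :=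
  Finset.prod_ne_zero_iff.mpr fun j _ ↦ one_sub_mul_pow_ne_zero ha hq j

theorem summable_norm_neg_mul_pow (a : ℂ) (hq : ‖q‖ < 1) :
    Summable fun j : ℕ ↦ ‖-(a * q ^ j)‖ := by
  simpa only [norm_neg, norm_mul] using (summable_norm_geometric_of_norm_lt_one hq).mul_left ‖a‖

theorem hasProd_qPochInf (a : ℂ) (hq : ‖q‖ < 1) :
    HasProd (fun j ↦ 1 - a * q ^ j) (qPochInf a q) := by
  simp only [qPochInf, sub_eq_add_neg]
  exact (multipliable_one_add_of_summable (summable_norm_neg_mul_pow a hq)).hasProd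

theorem tendsto_qPoch_qPochInf (a : ℂ) (hq : ‖q‖ < 1) :
    Tendsto (qPoch a q) atTop (𝓝 (qPochInf a q)) :=
  (hasProd_qPochInf a hq).tendsto_prod_nat

theorem qPochInf_ne_zero (ha : ‖a‖ < 1) (hq : ‖q‖ < 1) : qPochInf a q ≠ 0 := by
  simp only [qPochInf, sub_eq_add_neg]
  refine tprod_one_add_ne_zero_of_summable (fun j ↦ ?_) (summable_norm_neg_mul_pow a hq)
  simpa only [← sub_eq_add_neg] using one_sub_mul_pow_ne_zero ha hq.le j

theorem qPoch_succ (a q : ℂ) (n : ℕ) : qPoch a q (n + 1) = qPoch a q n * (1 - a * q ^ n) :=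
  Finset.prod_range_succ _ n

theorem qPoch_two_mul (a q : ℂ) (n : ℕ) :
    qPoch a q (2 * n) = qPoch a (q ^ 2) n * qPoch (a * q) (q ^ 2) n := by
  induction n with
  | zero => simp [qPoch]
  | succ n ih =>
    simp only [qPoch, Nat.mul_succ, Finset.prod_range_succ] at ih ⊢
    rw [ih]
    ring

theorem qPoch_sq_sq (a q : ℂ) (n : ℕ) :
    qPoch (a ^ 2) (q ^ 2) n = qPoch a q n * qPoch (-a) q n := by
  simp only [qPoch, ← Finset.prod_mul_distrib]
  exact Finset.prod_congr rfl fun j _ ↦ by ring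

theorem qPochInf_eq_qPochInf_sq_mul (a : ℂ) (hq : ‖q‖ < 1) :
    qPochInf a q = qPochInf a (q ^ 2) * qPochInf (a * q) (q ^ 2) := by
  have hq2 := norm_pow_lt_one hq two_ne_zero
  have h_even : Tendsto (fun n ↦ qPoch a q (2 * n)) atTop (𝓝 (qPochInf a q)) :=
    (tendsto_qPoch_qPochInf a hq).comp (tendsto_id.const_mul_atTop' two_pos)
  refine tendsto_nhds_unique h_even ?_
  exact ((tendsto_qPoch_qPochInf a hq2).mul (tendsto_qPoch_qPochInf (a * q) hq2)).congr
    fun n ↦ (qPoch_two_mul a q n).symm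

theorem qPochInf_sq_sq (a : ℂ) (hq : ‖q‖ < 1) :
    qPochInf (a ^ 2) (q ^ 2) = qPochInf a q * qPochInf (-a) q := by
  have hq2 := norm_pow_lt_one hq two_ne_zero
  refine tendsto_nhds_unique (tendsto_qPoch_qPochInf (a ^ 2) hq2) ?_
  exact ((tendsto_qPoch_qPochInf a hq).mul (tendsto_qPoch_qPochInf (-a) hq)).congr
    fun n ↦ (qPoch_sq_sq a q n).symm

end QPochhammer

section Telescoping

variable {q : ℂ}

theorem qPoch_two_mul_div_qPoch_pow_four (hq : ‖q‖ < 1) (n : ℕ) :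
    qPoch q q (2 * n) * q ^ (2 * n) / qPoch (q ^ 4) (q ^ 4) n =
      q ^ (2 * n) * qPoch q (q ^ 2) n / qPoch (-q ^ 2) (q ^ 2) n := by
  have hq2 := norm_pow_lt_one hq two_ne_zero
  have h_four : qPoch (q ^ 4) (q ^ 4) n = qPoch (q ^ 2) (q ^ 2) n * qPoch (-q ^ 2) (q ^ 2) n := by
    rw [show q ^ 4 = (q ^ 2) ^ 2 by ring]
    exact qPoch_sq_sq (q ^ 2) (q ^ 2) n
  rw [qPoch_two_mul, ← sq, h_four, mul_right_comm, mul_comm (qPoch (q ^ 2) (q ^ 2) n),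
    mul_div_mul_right _ _ (qPoch_ne_zero hq2 hq2.le n), mul_comm]

noncomputable def telescoper (q : ℂ) (n : ℕ) : ℂ :=
  qPoch q (q ^ 2) n * (1 + q ^ (2 * n)) / ((1 + q) * qPoch (-q ^ 2) (q ^ 2) n)

theorem telescoper_zero : telescoper q 0 = 2 / (1 + q) := by
  norm_num [telescoper, qPoch]

theorem telescoper_sub_telescoper_succ (hq : ‖q‖ < 1) (n : ℕ) :
    telescoper q n - telescoper q (n + 1) =
      q ^ (2 * n) * qPoch q (q ^ 2) n / qPoch (-q ^ 2) (q ^ 2) n := by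
  have hq2 := norm_pow_lt_one hq two_ne_zero
  have hneg : ‖-q ^ 2‖ < 1 := by rwa [norm_neg]
  have h_factor : 1 + q ^ (2 * (n + 1)) ≠ 0 := by
    convert one_sub_mul_pow_ne_zero hneg hq2.le n using 1
    ring
  have h_num : qPoch q (q ^ 2) (n + 1) = qPoch q (q ^ 2) n * (1 - q * q ^ (2 * n)) := by
    rw [qPoch_succ, pow_mul]
  have h_den : qPoch (-q ^ 2) (q ^ 2) (n + 1) = qPoch (-q ^ 2) (q ^ 2) n * (1 + q ^ (2 * (n + 1))) := by
    rw [qPoch_succ]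
    ring
  have h_one_add := one_add_ne_zero_of_norm_lt_one hq
  have h_poch := qPoch_ne_zero hneg hq2.le n
  rw [telescoper, telescoper, h_num, h_den]
  field_simp
  ring

theorem tendsto_telescoper (hq : ‖q‖ < 1) :
    Tendsto (telescoper q) atTop
      (𝓝 (qPochInf q (q ^ 2) / ((1 + q) * qPochInf (-q ^ 2) (q ^ 2)))) := by
  have hq2 := norm_pow_lt_one hq two_ne_zero
  have hneg : ‖-q ^ 2‖ < 1 := by rwa [norm_neg]
  have h_pow : Tendsto (fun n : ℕ ↦ q ^ (2 * n)) atTop (𝓝 0) := by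
    simpa only [pow_mul] using tendsto_pow_atTop_nhds_zero_of_norm_lt_one hq2
  have h_num : Tendsto (fun n ↦ 1 + q ^ (2 * n)) atTop (𝓝 1) := by
    simpa only [add_zero] using tendsto_const_nhds.add h_pow
  have h := ((tendsto_qPoch_qPochInf q hq2).mul h_num).div
    (tendsto_const_nhds.mul (tendsto_qPoch_qPochInf (-q ^ 2) hq2))
    (mul_ne_zero (one_add_ne_zero_of_norm_lt_one hq) (qPochInf_ne_zero hneg hq2))
  rwa [mul_one] at h

theorem summable_pow_mul_qPoch_div_qPoch (hq : ‖q‖ < 1) :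
    Summable fun n : ℕ ↦ q ^ (2 * n) * qPoch q (q ^ 2) n / qPoch (-q ^ 2) (q ^ 2) n := by
  have hq2 := norm_pow_lt_one hq two_ne_zero
  have hneg : ‖-q ^ 2‖ < 1 := by rwa [norm_neg]
  have h_ratio := (tendsto_qPoch_qPochInf q hq2).div (tendsto_qPoch_qPochInf (-q ^ 2) hq2)
    (qPochInf_ne_zero hneg hq2)
  simp only [mul_div_assoc, pow_mul]
  exact (summable_norm_geometric_of_norm_lt_one hq2).mul_tendsto_const
    (Nat.cofinite_eq_atTop ▸ h_ratio)

theorem hasSum_pow_mul_qPoch_div_qPoch (hq : ‖q‖ < 1) :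
    HasSum (fun n : ℕ ↦ q ^ (2 * n) * qPoch q (q ^ 2) n / qPoch (-q ^ 2) (q ^ 2) n)
      (2 / (1 + q) - qPochInf q (q ^ 2) / ((1 + q) * qPochInf (-q ^ 2) (q ^ 2))) := by
  simp only [← telescoper_sub_telescoper_succ hq, ← telescoper_zero (q := q)]
  refine HasSum.sub_succ_of_tendsto ?_ (tendsto_telescoper hq)
  simpa only [telescoper_sub_telescoper_succ hq] using summable_pow_mul_qPoch_div_qPoch hq

end Telescoping

theorem stmt_17 (q : ℂ) (hq : ‖q‖ < 1) :
    (qPochInf (q ^ 4) (q ^ 4) * ∑' n : ℕ, qPoch q q (2 * n) * q ^ (2 * n) / qPoch (q ^ 4) (q ^ 4) n =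
      qPochInf (q ^ 4) (q ^ 4) * ∑' n : ℕ, q ^ (2 * n) * qPoch q (q ^ 2) n / qPoch (-q ^ 2) (q ^ 2) n) ∧
    (qPochInf (q ^ 4) (q ^ 4) * ∑' n : ℕ, q ^ (2 * n) * qPoch q (q ^ 2) n / qPoch (-q ^ 2) (q ^ 2) n =
      2 * qPochInf (q ^ 4) (q ^ 4) / (1 + q) - qPochInf q q / (1 + q)) := by
  have hq2 := norm_pow_lt_one hq two_ne_zero
  have hneg : ‖-q ^ 2‖ < 1 := by rwa [norm_neg]
  have h_four : qPochInf (q ^ 4) (q ^ 4) = qPochInf (q ^ 2) (q ^ 2) * qPochInf (-q ^ 2) (q ^ 2) := by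
    rw [show q ^ 4 = (q ^ 2) ^ 2 by ring]
    exact qPochInf_sq_sq (q ^ 2) hq2
  have h_one : qPochInf q q = qPochInf q (q ^ 2) * qPochInf (q ^ 2) (q ^ 2) := by
    rw [qPochInf_eq_qPochInf_sq_mul q hq, ← sq]
  have h_one_add := one_add_ne_zero_of_norm_lt_one hq
  have h_inf := qPochInf_ne_zero hneg hq2
  refine ⟨congrArg _ (tsum_congr (qPoch_two_mul_div_qPoch_pow_four hq)), ?_⟩
  rw [(hasSum_pow_mul_qPoch_div_qPoch hq).tsum_eq, h_four, h_one]
  field_simp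
end

section
/- For every nonnegative integer n, the number of partitions of n with distinct even parts (odd parts may repeat) equals the number of partitions of n into parts none of which is divisible by 4. -/
open Multiset

def twoVal (k : ℕ) : ℕ := k.factorization 2
def oddPart (k : ℕ) : ℕ := k / 2 ^ twoVal k

lemma pow_twoVal_mul_oddPart (k : ℕ) : 2 ^ twoVal k * oddPart k = k :=
  Nat.ordProj_mul_ordCompl_eq_self k 2

lemma oddPart_not_dvd {k : ℕ} (hk : k ≠ 0) : ¬ 2 ∣ oddPart k :=
  Nat.not_dvd_ordCompl Nat.prime_two hk

lemma oddPart_ne_zero {k : ℕ} (hk : k ≠ 0) : oddPart k ≠ 0 := by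
  intro h
  apply hk
  rw [← pow_twoVal_mul_oddPart k, h, mul_zero]

lemma twoVal_pos {k : ℕ} (h2 : 2 ∣ k) (h0 : k ≠ 0) : 1 ≤ twoVal k :=
  (Nat.Prime.dvd_iff_one_le_factorization Nat.prime_two h0).mp h2

lemma twoVal_pow_mul {c u : ℕ} (hu : ¬ 2 ∣ u) : twoVal (2 ^ c * u) = c := by
  have hu0 : u ≠ 0 := by rintro rfl; exact hu (dvd_zero 2)
  unfold twoVal
  rw [Nat.factorization_mul (pow_ne_zero _ two_ne_zero) hu0]
  simp [Nat.Prime.factorization_pow, Nat.factorization_eq_zero_of_not_dvd hu,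
    Nat.Prime.factorization_self Nat.prime_two]

lemma oddPart_pow_mul {c u : ℕ} (hu : ¬ 2 ∣ u) : oddPart (2 ^ c * u) = u := by
  unfold oddPart
  rw [twoVal_pow_mul hu, Nat.mul_div_cancel_left _ (pow_pos two_pos c)]

lemma pow_mul_inj {c c' u u' : ℕ} (hu : ¬ 2 ∣ u) (hu' : ¬ 2 ∣ u')
    (h : 2 ^ c * u = 2 ^ c' * u') : c = c' ∧ u = u' := by
  constructor
  · rw [← twoVal_pow_mul (c := c) hu, h, twoVal_pow_mul hu']
  · rw [← oddPart_pow_mul (c := c) hu, h, oddPart_pow_mul hu']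
def splitPart (k : ℕ) : Multiset ℕ :=
  if 2 ∣ k then Multiset.replicate (2 ^ (twoVal k - 1)) (2 * oddPart k) else {k}

lemma splitPart_sum {k : ℕ} (hk : k ≠ 0) : (splitPart k).sum = k := by
  unfold splitPart
  split_ifs with h
  · rw [Multiset.sum_replicate, smul_eq_mul]
    calc 2 ^ (twoVal k - 1) * (2 * oddPart k) = 2 ^ (twoVal k - 1) * 2 * oddPart k := by ring
    _ = 2 ^ twoVal k * oddPart k := by rw [← pow_succ, Nat.sub_add_cancel (twoVal_pos h hk)]
    _ = k := pow_twoVal_mul_oddPart k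
  · simp

lemma mem_splitPart {k w : ℕ} (hk : k ≠ 0) (hw : w ∈ splitPart k) : w ≠ 0 ∧ ¬ 4 ∣ w := by
  unfold splitPart at hw
  split_ifs at hw with h
  · have hw' : w = 2 * oddPart k := Multiset.eq_of_mem_replicate hw
    subst hw'
    have h1 := oddPart_ne_zero hk
    have h2 := oddPart_not_dvd hk
    constructor
    · exact Nat.mul_ne_zero two_ne_zero h1
    · intro h4; omega
  · rw [Multiset.mem_singleton] at hw
    subst hw
    refine ⟨hk, fun h4 => h (dvd_trans ⟨2, rfl⟩ h4)⟩

def glSplit (s : Multiset ℕ) : Multiset ℕ := s.bind splitPart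

lemma glSplit_mem {s : Multiset ℕ} (hpos : ∀ k ∈ s, k ≠ 0) :
    ∀ w ∈ glSplit s, w ≠ 0 ∧ ¬ 4 ∣ w := by
  intro w hw
  rw [glSplit, Multiset.mem_bind] at hw
  obtain ⟨k, hk, hwk⟩ := hw
  exact mem_splitPart (hpos k hk) hwk

lemma glSplit_sum {s : Multiset ℕ} (hpos : ∀ k ∈ s, k ≠ 0) :
    (glSplit s).sum = s.sum := by
  rw [glSplit, Multiset.sum_bind]
  rw [Multiset.map_congr rfl (fun k hk => splitPart_sum (hpos k hk)), Multiset.map_id']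

lemma sum_map_indicator (s : Multiset ℕ) (w : ℕ) :
    (s.map fun k => if w = k then 1 else 0).sum = s.count w := by
  induction s using Multiset.induction_on with
  | empty => simp
  | cons a s ih => simp [Multiset.count_cons, ih]; omega

lemma glSplit_count_odd {s : Multiset ℕ} (hpos : ∀ k ∈ s, k ≠ 0) {w : ℕ} (hw : ¬ 2 ∣ w) :
    (glSplit s).count w = s.count w := by
  rw [glSplit, Multiset.count_bind]
  rw [Multiset.map_congr rfl (fun k hk => ?_), sum_map_indicator]
  unfold splitPart
  by_cases h : 2 ∣ k
  · rw [if_pos h, Multiset.count_replicate,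
      if_neg (fun he : 2 * oddPart k = w => hw ⟨oddPart k, he.symm⟩),
      if_neg (fun he : w = k => hw (he ▸ h))]
  · rw [if_neg h]; exact Multiset.count_singleton w k

lemma glSplit_count_four {s : Multiset ℕ} (hpos : ∀ k ∈ s, k ≠ 0) {w : ℕ} (hw : 4 ∣ w) :
    (glSplit s).count w = 0 := by
  rw [Multiset.count_eq_zero]
  intro hmem
  exact (glSplit_mem hpos w hmem).2 hw

lemma splitPart_count_two {k w : ℕ} (hk : k ≠ 0) (hw2 : 2 ∣ w) (hw4 : ¬ 4 ∣ w) :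
    (splitPart k).count w = if 2 ∣ k ∧ oddPart k = w / 2 then 2 ^ (twoVal k - 1) else 0 := by
  unfold splitPart
  split_ifs with h h2 h2
  · rw [Multiset.count_replicate, if_pos]
    obtain ⟨c, rfl⟩ := hw2
    rw [Nat.mul_div_cancel_left c two_pos] at h2
    rw [h2.2]
  · rw [Multiset.count_replicate, if_neg]
    intro he
    apply h2
    refine ⟨h, ?_⟩
    rw [← he, Nat.mul_div_cancel_left _ two_pos]
  · exact absurd h2.1 h
  · rw [Multiset.count_singleton, if_neg]
    intro he
    exact h (he ▸ hw2)

lemma glSplit_count_two {s : Multiset ℕ} (hpos : ∀ k ∈ s, k ≠ 0) {w : ℕ} (hw2 : 2 ∣ w)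
    (hw4 : ¬ 4 ∣ w) :
    (glSplit s).count w
      = (s.map fun k => if 2 ∣ k ∧ oddPart k = w / 2 then 2 ^ (twoVal k - 1) else 0).sum := by
  rw [glSplit, Multiset.count_bind]
  exact congrArg _ (Multiset.map_congr rfl fun k hk => splitPart_count_two (hpos k hk) hw2 hw4)
def glMerge (s : Multiset ℕ) : Multiset ℕ :=
  s.filter (fun k => ¬ 2 ∣ k) +
    (s.dedup.filter (fun v => 2 ∣ v)).bind
      (fun v => ((s.count v).bitIndices.map fun i => 2 ^ (i + 1) * (v / 2) : List ℕ))

lemma glMerge_mem {s : Multiset ℕ} (hpos : ∀ k ∈ s, k ≠ 0) :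
    ∀ w ∈ glMerge s, w ≠ 0 := by
  intro w hw
  rw [glMerge, Multiset.mem_add] at hw
  rcases hw with hw | hw
  · exact hpos w (Multiset.mem_of_mem_filter hw)
  · rw [Multiset.mem_bind] at hw
    obtain ⟨v, hv, hwv⟩ := hw
    rw [Multiset.mem_filter, Multiset.mem_dedup] at hv
    rw [Multiset.mem_coe, List.mem_map] at hwv
    obtain ⟨i, _, rfl⟩ := hwv
    have hv0 : v ≠ 0 := hpos v hv.1
    have hv2 : 2 ∣ v := hv.2
    have : v / 2 ≠ 0 := by omega
    exact Nat.mul_ne_zero (pow_ne_zero _ two_ne_zero) this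

lemma glMerge_count_odd (s : Multiset ℕ) {w : ℕ} (hw : ¬ 2 ∣ w) :
    (glMerge s).count w = s.count w := by
  rw [glMerge, Multiset.count_add, Multiset.count_filter, if_pos hw, Multiset.count_bind]
  have h0 : ∀ v ∈ s.dedup.filter (fun v => 2 ∣ v),
      Multiset.count w ((s.count v).bitIndices.map fun i => 2 ^ (i + 1) * (v / 2) : List ℕ)
        = 0 := by
    intro v _
    rw [Multiset.count_eq_zero]
    intro hmem
    rw [Multiset.mem_coe, List.mem_map] at hmem
    obtain ⟨i, _, rfl⟩ := hmem
    exact hw (dvd_mul_of_dvd_left (dvd_pow_self 2 (Nat.succ_ne_zero i)) _)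
  rw [Multiset.map_congr rfl h0]
  simp

lemma sum_map_ite_nodup {t : Multiset ℕ} (hnd : t.Nodup) (a : ℕ) (X : ℕ) :
    (t.map fun v => if v = a then X else 0).sum = if a ∈ t then X else 0 := by
  induction t using Multiset.induction_on with
  | empty => simp
  | cons b t ih =>
    obtain ⟨hb, hnd'⟩ := Multiset.nodup_cons.mp hnd
    rw [Multiset.map_cons, Multiset.sum_cons, ih hnd']
    by_cases h1 : b = a
    · subst h1
      rw [if_pos rfl, if_neg hb, if_pos (Multiset.mem_cons_self b t), add_zero]
    · rw [if_neg h1, zero_add]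
      by_cases h2 : a ∈ t
      · rw [if_pos h2, if_pos (Multiset.mem_cons_of_mem h2)]
      · rw [if_neg h2, if_neg (fun h => by
          rcases Multiset.mem_cons.mp h with h | h
          exacts [h1 h.symm, h2 h])]

lemma glMerge_count_even {s : Multiset ℕ} (hreg : ∀ k ∈ s, ¬ 4 ∣ k) {u c : ℕ}
    (hu : ¬ 2 ∣ u) (hc : 1 ≤ c) :
    (glMerge s).count (2 ^ c * u)
      = if (c - 1) ∈ (s.count (2 * u)).bitIndices then 1 else 0 := by
  have hw2 : 2 ∣ 2 ^ c * u := dvd_mul_of_dvd_left (dvd_pow_self 2 (by omega)) u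
  rw [glMerge, Multiset.count_add, Multiset.count_filter, if_neg (not_not_intro hw2),
    zero_add, Multiset.count_bind]
  have key : ∀ v ∈ s.dedup.filter (fun v => 2 ∣ v),
      (Multiset.count (2 ^ c * u)
          ((s.count v).bitIndices.map fun i => 2 ^ (i + 1) * (v / 2) : List ℕ))
        = if v = 2 * u then (if (c - 1) ∈ (s.count (2 * u)).bitIndices then 1 else 0)
          else 0 := by
    intro v hv
    rw [Multiset.mem_filter, Multiset.mem_dedup] at hv
    have hv4 : ¬ 4 ∣ v := hreg v hv.1
    obtain ⟨m, rfl⟩ := hv.2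
    have hdiv : 2 * m / 2 = m := by omega
    have hmodd : ¬ 2 ∣ m := by omega
    have hnd : ((s.count (2 * m)).bitIndices : Multiset ℕ).Nodup :=
      Nat.bitIndices_sorted.nodup
    simp only [hdiv]
    rw [← Multiset.map_coe, Multiset.count_map]
    by_cases hmu : m = u
    · subst hmu
      rw [if_pos rfl]
      have hiff : ∀ i ∈ ((s.count (2 * m)).bitIndices : Multiset ℕ),
          (2 ^ c * m = 2 ^ (i + 1) * m) ↔ (c - 1 = i) := by
        intro i _
        constructor
        · intro h
          have := (pow_mul_inj hu hu h).1
          omega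
        · intro h
          have hi : i + 1 = c := by omega
          rw [hi]
      rw [Multiset.filter_congr hiff, ← Multiset.countP_eq_card_filter]
      have hcnt : Multiset.countP (fun i => c - 1 = i)
            ((s.count (2 * m)).bitIndices : Multiset ℕ)
          = Multiset.count (c - 1) ((s.count (2 * m)).bitIndices : Multiset ℕ) := rfl
      rw [hcnt]
      by_cases hmem : (c - 1) ∈ (s.count (2 * m)).bitIndices
      · rw [if_pos hmem]
        exact Multiset.count_eq_one_of_mem hnd (Multiset.mem_coe.mpr hmem)
      · rw [if_neg hmem]
        exact Multiset.count_eq_zero.mpr (fun h => hmem (Multiset.mem_coe.mp h))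
    · rw [if_neg (by omega)]
      rw [Multiset.filter_eq_nil.mpr ?_, Multiset.card_zero]
      intro i _ h
      exact hmu ((pow_mul_inj hu hmodd h).2.symm)
  rw [Multiset.map_congr rfl key,
    sum_map_ite_nodup ((Multiset.nodup_dedup s).filter _) _ _]
  by_cases h : 2 * u ∈ s
  · rw [if_pos]
    rw [Multiset.mem_filter, Multiset.mem_dedup]
    exact ⟨h, ⟨u, rfl⟩⟩
  · rw [if_neg (fun hmem => h (Multiset.mem_dedup.mp (Multiset.mem_filter.mp hmem).1))]
    rw [Multiset.count_eq_zero.mpr h]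
    simp
lemma glSplit_of_odd {t : Multiset ℕ} (h : ∀ k ∈ t, ¬ 2 ∣ k) : glSplit t = t := by
  rw [glSplit, Multiset.bind_congr (g := fun k => ({k} : Multiset ℕ)) (fun k hk => ?_),
    Multiset.bind_singleton, Multiset.map_id']
  rw [splitPart, if_neg (h k hk)]

lemma glSplit_glMerge {s : Multiset ℕ} (hpos : ∀ k ∈ s, k ≠ 0) (hreg : ∀ k ∈ s, ¬ 4 ∣ k) :
    glSplit (glMerge s) = s := by
  rw [Multiset.ext]
  intro w
  by_cases hw2 : 2 ∣ w
  swap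
  · rw [glSplit_count_odd (glMerge_mem hpos) hw2, glMerge_count_odd s hw2]
  by_cases hw4 : 4 ∣ w
  · rw [glSplit_count_four (glMerge_mem hpos) hw4,
      Eq.comm, Multiset.count_eq_zero]
    exact fun h => hreg w h hw4
  -- now w = 2 * u with u odd
  have hw0 : w ≠ 0 := fun h => hw4 (h ▸ dvd_zero 4)
  obtain ⟨u, rfl⟩ := hw2
  have hu : ¬ 2 ∣ u := by omega
  rw [glMerge, glSplit, Multiset.add_bind, Multiset.count_add]
  have h1 : (s.filter (fun k => ¬ 2 ∣ k)).bind splitPart = s.filter (fun k => ¬ 2 ∣ k) :=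
    glSplit_of_odd (fun k hk => (Multiset.mem_filter.mp hk).2)
  rw [h1, Multiset.count_filter, if_neg (not_not_intro ⟨u, rfl⟩), zero_add,
    Multiset.bind_assoc, Multiset.count_bind]
  have key : ∀ v ∈ s.dedup.filter (fun v => 2 ∣ v),
      (Multiset.count (2 * u)
        (Multiset.bind
          ((s.count v).bitIndices.map fun i => 2 ^ (i + 1) * (v / 2) : List ℕ) splitPart))
        = if v = 2 * u then s.count (2 * u) else 0 := by
    intro v hv
    rw [Multiset.mem_filter, Multiset.mem_dedup] at hv
    have hv0 : v ≠ 0 := hpos v hv.1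
    have hv4 : ¬ 4 ∣ v := hreg v hv.1
    obtain ⟨m, rfl⟩ := hv.2
    have hdiv : 2 * m / 2 = m := by omega
    have hmodd : ¬ 2 ∣ m := by omega
    have hm0 : m ≠ 0 := by omega
    simp only [hdiv]
    rw [← Multiset.map_coe, Multiset.bind_map, Multiset.count_bind, Multiset.map_coe]
    have hsp : ∀ i, splitPart (2 ^ (i + 1) * m) = Multiset.replicate (2 ^ i) (2 * m) := by
      intro i
      rw [splitPart, if_pos (dvd_mul_of_dvd_left (dvd_pow_self 2 (Nat.succ_ne_zero i)) m),
        twoVal_pow_mul hmodd, oddPart_pow_mul hmodd, Nat.add_sub_cancel]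
    by_cases hmu : m = u
    · subst hmu
      rw [if_pos rfl]
      have : ((s.count (2 * m)).bitIndices.map
            fun i => Multiset.count (2 * m) (splitPart (2 ^ (i + 1) * m)))
          = (s.count (2 * m)).bitIndices.map fun i => 2 ^ i := by
        apply List.map_congr_left
        intro i _
        rw [hsp i, Multiset.count_replicate, if_pos rfl]
      rw [this, Multiset.sum_coe, Nat.twoPowSum_bitIndices]
    · rw [if_neg (by omega)]
      have : ((s.count (2 * m)).bitIndices.map
            fun i => Multiset.count (2 * u) (splitPart (2 ^ (i + 1) * m)))
          = (s.count (2 * m)).bitIndices.map fun _ => 0 := by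
        apply List.map_congr_left
        intro i _
        rw [hsp i, Multiset.count_replicate, if_neg (by omega)]
      rw [this, Multiset.sum_coe]
      simp
  rw [Multiset.map_congr rfl key,
    sum_map_ite_nodup ((Multiset.nodup_dedup s).filter _) _ _]
  by_cases h : 2 * u ∈ s
  · rw [if_pos]
    rw [Multiset.mem_filter, Multiset.mem_dedup]
    exact ⟨h, ⟨u, rfl⟩⟩
  · rw [if_neg (fun hmem => h (Multiset.mem_dedup.mp (Multiset.mem_filter.mp hmem).1)),
      Eq.comm, Multiset.count_eq_zero]
    exact h
lemma glMerge_glSplit {s : Multiset ℕ} (hpos : ∀ k ∈ s, k ≠ 0)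
    (hdist : ∀ k ∈ s, 2 ∣ k → s.count k = 1) : glMerge (glSplit s) = s := by
  have hpos' : ∀ w ∈ glSplit s, w ≠ 0 := fun w hw => (glSplit_mem hpos w hw).1
  have hreg' : ∀ w ∈ glSplit s, ¬ 4 ∣ w := fun w hw => (glSplit_mem hpos w hw).2
  rw [Multiset.ext]
  intro w
  by_cases hw2 : 2 ∣ w
  swap
  · rw [glMerge_count_odd _ hw2, glSplit_count_odd hpos hw2]
  by_cases hw0 : w = 0
  · subst hw0
    rw [Multiset.count_eq_zero.mpr (fun h => glMerge_mem hpos' 0 h rfl), Eq.comm,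
      Multiset.count_eq_zero]
    exact fun h => hpos 0 h rfl
  have hu : ¬ 2 ∣ oddPart w := oddPart_not_dvd hw0
  have hc : 1 ≤ twoVal w := twoVal_pos hw2 hw0
  have hwcu : 2 ^ twoVal w * oddPart w = w := pow_twoVal_mul_oddPart w
  have key := glMerge_count_even hreg' hu hc
  rw [hwcu] at key
  rw [key]
  -- compute the count of 2 * oddPart w in glSplit s as a sum of distinct two-powers
  set B : Finset ℕ :=
    (s.toFinset.filter (fun a => 2 ∣ a ∧ oddPart a = oddPart w)).image
      (fun a => twoVal a - 1) with hB
  have hinj : ∀ a ∈ s.toFinset.filter (fun a => 2 ∣ a ∧ oddPart a = oddPart w),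
      ∀ b ∈ s.toFinset.filter (fun a => 2 ∣ a ∧ oddPart a = oddPart w),
      twoVal a - 1 = twoVal b - 1 → a = b := by
    intro a ha b hb hab
    rw [Finset.mem_filter, Multiset.mem_toFinset] at ha hb
    have ha0 : a ≠ 0 := hpos a ha.1
    have hb0 : b ≠ 0 := hpos b hb.1
    have hca : 1 ≤ twoVal a := twoVal_pos ha.2.1 ha0
    have hcb : 1 ≤ twoVal b := twoVal_pos hb.2.1 hb0
    have hcc : twoVal a = twoVal b := by omega
    rw [← pow_twoVal_mul_oddPart a, ← pow_twoVal_mul_oddPart b, ha.2.2, hb.2.2, hcc]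
  have hN : (glSplit s).count (2 * oddPart w) = ∑ j ∈ B, 2 ^ j := by
    have hdiv : 2 * oddPart w / 2 = oddPart w := by omega
    rw [glSplit_count_two hpos ⟨oddPart w, rfl⟩ (by omega)]
    simp only [hdiv]
    rw [Finset.sum_multiset_map_count, hB, Finset.sum_image hinj, Finset.sum_filter]
    apply Finset.sum_congr rfl
    intro a ha
    rw [Multiset.mem_toFinset] at ha
    by_cases hPa : 2 ∣ a ∧ oddPart a = oddPart w
    · rw [if_pos hPa]
      rw [hdist a ha hPa.1, one_smul]
    · rw [if_neg hPa]
      exact smul_zero _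
  rw [hN]
  have hmemiff : (twoVal w - 1) ∈ (∑ j ∈ B, 2 ^ j).bitIndices ↔ (twoVal w - 1) ∈ B := by
    rw [← List.mem_toFinset, Finset.toFinset_bitIndices_twoPowSum]
  by_cases hws : w ∈ s
  · rw [if_pos (hmemiff.mpr ?_), Eq.comm]
    · exact hdist w hws hw2
    · rw [hB, Finset.mem_image]
      exact ⟨w, Finset.mem_filter.mpr ⟨Multiset.mem_toFinset.mpr hws, ⟨hw2, rfl⟩⟩, rfl⟩
  · rw [if_neg (fun hmem => ?_), Eq.comm, Multiset.count_eq_zero]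
    · exact hws
    · obtain ⟨a, ha, haw⟩ := Finset.mem_image.mp (hmemiff.mp hmem)
      have : a = w := by
        rw [Finset.mem_filter, Multiset.mem_toFinset] at ha
        have ha0 : a ≠ 0 := hpos a ha.1
        have hca : 1 ≤ twoVal a := twoVal_pos ha.2.1 ha0
        have hcc : twoVal a = twoVal w := by omega
        rw [← pow_twoVal_mul_oddPart a, ha.2.2, hcc, hwcu]
      rw [this] at ha
      exact hws (Multiset.mem_toFinset.mp (Finset.mem_filter.mp ha).1)
lemma glMerge_sum {t : Multiset ℕ} (hpos : ∀ k ∈ t, k ≠ 0) (hreg : ∀ k ∈ t, ¬ 4 ∣ k) :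
    (glMerge t).sum = t.sum := by
  conv_rhs => rw [← glSplit_glMerge hpos hreg]
  rw [glSplit_sum (glMerge_mem hpos)]

lemma glMerge_distinct {t : Multiset ℕ} (hpos : ∀ k ∈ t, k ≠ 0) (hreg : ∀ k ∈ t, ¬ 4 ∣ k) :
    ∀ w ∈ glMerge t, 2 ∣ w → (glMerge t).count w = 1 := by
  intro w hw h2
  have hw0 : w ≠ 0 := glMerge_mem hpos w hw
  have key := glMerge_count_even hreg (oddPart_not_dvd hw0) (twoVal_pos h2 hw0)
  rw [pow_twoVal_mul_oddPart w] at key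
  have h1 : 0 < (glMerge t).count w := Multiset.count_pos.mpr hw
  rw [key] at h1 ⊢
  by_cases hmem : twoVal w - 1 ∈ ((t.count (2 * oddPart w)).bitIndices)
  · rw [if_pos hmem]
  · rw [if_neg hmem] at h1; omega

lemma parts_ne {n : ℕ} (p : n.Partition) : ∀ k ∈ p.parts, k ≠ 0 :=
  fun _ hk => (p.parts_pos hk).ne'

theorem stmt_18 (n : ℕ) :
    Nat.card {p : n.Partition // ∀ k ∈ p.parts, Even k → p.parts.count k = 1} =
      Nat.card {p : n.Partition // ∀ k ∈ p.parts, ¬ (4 ∣ k)} := by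
  apply Nat.card_congr
  refine
    { toFun := fun p =>
        ⟨⟨glSplit p.1.parts,
          fun hk => Nat.pos_of_ne_zero (glSplit_mem (parts_ne p.1) _ hk).1,
          by rw [glSplit_sum (parts_ne p.1)]; exact p.1.parts_sum⟩,
          fun k hk => (glSplit_mem (parts_ne p.1) k hk).2⟩,
      invFun := fun q =>
        ⟨⟨glMerge q.1.parts,
          fun hk => Nat.pos_of_ne_zero (glMerge_mem (parts_ne q.1) _ hk),
          by rw [glMerge_sum (parts_ne q.1) q.2]; exact q.1.parts_sum⟩,
          fun k hk hev => glMerge_distinct (parts_ne q.1) q.2 k hk hev.two_dvd⟩,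
      left_inv := ?_, right_inv := ?_ }
  · intro p
    apply Subtype.ext
    apply Nat.Partition.ext
    exact glMerge_glSplit (parts_ne p.1)
      (fun k hk h2 => p.2 k hk (by obtain ⟨c, rfl⟩ := h2; exact even_two_mul c))
  · intro q
    apply Subtype.ext
    apply Nat.Partition.ext
    exact glSplit_glMerge (parts_ne q.1) q.2
end
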